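/- arXiv:2605.17848 — 2 statements merged into one kernel-verified Lean document; each statement's English description precedes it below -/
import Mathlib

section
/- With the setup of the Bellman-type operator $T_\mu$ parametrized by a signal model $\mu$ (i.e., $(T_\mu Q)(z,x,a) = \sum_s \mu(z,x)[s](g(x,a,s) + \delta \sum_{x^+}\varphi(x,s,a)[x^+] \max_{a'}Q(l(z,s),x^+,a'))$), suppose $\mu, \bar\mu$ are two signal models with $\max_{z,x}\sum_s |\mu(z,x)[s] - \bar\mu(z,x)[s]| \le |S|\varepsilon_\mu$, and $Q, \bar Q$ satisfy $\|Q\|_\infty, \|\bar Q\|_\infty \le \frac{G}{1-\delta}$. Then $\|T_\mu Q - T_{\bar\mu}\bar Q\|_\infty \le \frac{\varepsilon_\mu |S| G}{1-\delta} + \delta\|Q - \bar Q\|_\infty$. -/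
lemma aux_abs_ciSup_le {ι : Type*} [Fintype ι] [Nonempty ι] (f : ι → ℝ) (C : ℝ)
    (h : ∀ i, |f i| ≤ C) : |⨆ i, f i| ≤ C := by
  rw [abs_le]
  constructor
  · exact le_trans (abs_le.mp (h (Classical.arbitrary ι))).1
      (le_ciSup (Set.Finite.bddAbove (Set.finite_range f)) _)
  · exact ciSup_le fun i => (abs_le.mp (h i)).2

lemma aux_abs_ciSup_sub_le {ι : Type*} [Fintype ι] [Nonempty ι] (f g : ι → ℝ) (C : ℝ)
    (h : ∀ i, |f i - g i| ≤ C) : |(⨆ i, f i) - ⨆ i, g i| ≤ C := by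
  rw [abs_sub_le_iff]
  constructor
  · rw [sub_le_iff_le_add]
    apply ciSup_le
    intro i
    have h1 := (abs_le.mp (h i)).2
    have h2 := le_ciSup (Set.Finite.bddAbove (Set.finite_range g)) i
    linarith
  · rw [sub_le_iff_le_add]
    apply ciSup_le
    intro i
    have h1 := (abs_le.mp (h i)).1
    have h2 := le_ciSup (Set.Finite.bddAbove (Set.finite_range f)) i
    linarith

theorem stmt_6 {Z X A S : Type*} [Fintype Z] [Fintype X] [Fintype A] [Fintype S]
    [Nonempty Z] [Nonempty X] [Nonempty A] [Nonempty S]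
    (δ G εμ : ℝ) (hδ : δ ∈ Set.Ioo (0:ℝ) 1) (hG : 0 ≤ G) (hεμ : 0 ≤ εμ)
    (g : X → A → S → ℝ) (hg : ∀ x a s, |g x a s| ≤ G)
    (l : Z → S → Z)
    (φ : X → S → A → X → ℝ) (hφ0 : ∀ x s a x', 0 ≤ φ x s a x')
    (hφ1 : ∀ x s a, ∑ x', φ x s a x' = 1)
    (μ μ' : Z → X → S → ℝ)
    (hμ0 : ∀ z x s, 0 ≤ μ z x s) (hμ1 : ∀ z x, ∑ s, μ z x s = 1)
    (hμ'0 : ∀ z x s, 0 ≤ μ' z x s) (hμ'1 : ∀ z x, ∑ s, μ' z x s = 1)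
    (hclose : ∀ z x, ∑ s, |μ z x s - μ' z x s| ≤ (Fintype.card S : ℝ) * εμ)
    (Q Q' : Z → X → A → ℝ)
    (hQ : ∀ z x a, |Q z x a| ≤ G / (1 - δ))
    (hQ' : ∀ z x a, |Q' z x a| ≤ G / (1 - δ)) :
    (⨆ z, ⨆ x, ⨆ a,
      |(∑ s, μ z x s * (g x a s + δ * ∑ x', φ x s a x' * (⨆ a', Q (l z s) x' a')))
        - ∑ s, μ' z x s * (g x a s + δ * ∑ x', φ x s a x' * (⨆ a', Q' (l z s) x' a'))|)
      ≤ εμ * (Fintype.card S : ℝ) * G / (1 - δ)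
        + δ * ⨆ z, ⨆ x, ⨆ a, |Q z x a - Q' z x a| := by
  obtain ⟨hδ0, hδ1⟩ := hδ
  have h1δ : (0:ℝ) < 1 - δ := by linarith
  set C : ℝ := G / (1 - δ) with hC
  have hC0 : 0 ≤ C := div_nonneg hG (le_of_lt h1δ)
  set M : ℝ := ⨆ z, ⨆ x, ⨆ a, |Q z x a - Q' z x a| with hMdef
  have hM : ∀ z x a, |Q z x a - Q' z x a| ≤ M := by
    intro z x a
    have h1 : |Q z x a - Q' z x a| ≤ ⨆ a, |Q z x a - Q' z x a| :=
      le_ciSup (f := fun a => |Q z x a - Q' z x a|)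
        (Set.Finite.bddAbove (Set.finite_range _)) a
    have h2 : (⨆ a, |Q z x a - Q' z x a|) ≤ ⨆ x, ⨆ a, |Q z x a - Q' z x a| :=
      le_ciSup (f := fun x => ⨆ a, |Q z x a - Q' z x a|)
        (Set.Finite.bddAbove (Set.finite_range _)) x
    have h3 : (⨆ x, ⨆ a, |Q z x a - Q' z x a|) ≤ M :=
      le_ciSup (f := fun z => ⨆ x, ⨆ a, |Q z x a - Q' z x a|)
        (Set.Finite.bddAbove (Set.finite_range _)) z
    exact le_trans h1 (le_trans h2 h3)
  have hM0 : 0 ≤ M :=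
    le_trans (abs_nonneg _) (hM (Classical.arbitrary Z) (Classical.arbitrary X)
      (Classical.arbitrary A))
  apply ciSup_le; intro z
  apply ciSup_le; intro x
  apply ciSup_le; intro a
  set F : S → ℝ := fun s => g x a s + δ * ∑ x', φ x s a x' * (⨆ a', Q (l z s) x' a') with hFdef
  set F' : S → ℝ := fun s => g x a s + δ * ∑ x', φ x s a x' * (⨆ a', Q' (l z s) x' a') with hF'def
  -- bounds on inner sups
  have hV : ∀ s x', |⨆ a', Q (l z s) x' a'| ≤ C :=
    fun s x' => aux_abs_ciSup_le _ _ (fun a' => hQ _ _ _)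
  have hV' : ∀ s x', |⨆ a', Q' (l z s) x' a'| ≤ C :=
    fun s x' => aux_abs_ciSup_le _ _ (fun a' => hQ' _ _ _)
  have hVV' : ∀ s x', |(⨆ a', Q (l z s) x' a') - ⨆ a', Q' (l z s) x' a'| ≤ M :=
    fun s x' => aux_abs_ciSup_sub_le _ _ _ (fun a' => hM _ _ _)
  -- convex combination bound
  have hsum : ∀ s, |∑ x', φ x s a x' * (⨆ a', Q (l z s) x' a')| ≤ C := by
    intro s
    calc |∑ x', φ x s a x' * (⨆ a', Q (l z s) x' a')|
        ≤ ∑ x', |φ x s a x' * (⨆ a', Q (l z s) x' a')| := Finset.abs_sum_le_sum_abs _ _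
      _ ≤ ∑ x', φ x s a x' * C := by
          apply Finset.sum_le_sum
          intro x' _
          rw [abs_mul, abs_of_nonneg (hφ0 x s a x')]
          exact mul_le_mul_of_nonneg_left (hV s x') (hφ0 x s a x')
      _ = C := by rw [← Finset.sum_mul, hφ1, one_mul]
  have hF : ∀ s, |F s| ≤ C := by
    intro s
    have h1 := hg x a s
    have h2 := hsum s
    have habs : |F s| ≤ |g x a s| + δ * |∑ x', φ x s a x' * (⨆ a', Q (l z s) x' a')| := by
      refine le_trans (abs_add_le _ _) ?_
      rw [abs_mul, abs_of_nonneg (le_of_lt hδ0)]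
    have : |g x a s| + δ * |∑ x', φ x s a x' * (⨆ a', Q (l z s) x' a')| ≤ G + δ * C := by
      have := mul_le_mul_of_nonneg_left h2 (le_of_lt hδ0)
      linarith
    have hGC : G + δ * C = C := by
      rw [hC]; field_simp; ring
    linarith
  have hFF' : ∀ s, |F s - F' s| ≤ δ * M := by
    intro s
    have heq : F s - F' s = δ * ∑ x', φ x s a x' *
        ((⨆ a', Q (l z s) x' a') - ⨆ a', Q' (l z s) x' a') := by
      have h3 : (∑ x', φ x s a x' * (⨆ a', Q (l z s) x' a'))
          - (∑ x', φ x s a x' * (⨆ a', Q' (l z s) x' a'))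
          = ∑ x', φ x s a x' * ((⨆ a', Q (l z s) x' a') - ⨆ a', Q' (l z s) x' a') := by
        rw [← Finset.sum_sub_distrib]
        exact Finset.sum_congr rfl fun _ _ => (mul_sub _ _ _).symm
      simp only [hFdef, hF'def]
      rw [← h3]
      ring
    rw [heq, abs_mul, abs_of_nonneg (le_of_lt hδ0)]
    apply mul_le_mul_of_nonneg_left _ (le_of_lt hδ0)
    calc |∑ x', φ x s a x' * ((⨆ a', Q (l z s) x' a') - ⨆ a', Q' (l z s) x' a')|
        ≤ ∑ x', |φ x s a x' * ((⨆ a', Q (l z s) x' a') - ⨆ a', Q' (l z s) x' a')| :=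
          Finset.abs_sum_le_sum_abs _ _
      _ ≤ ∑ x', φ x s a x' * M := by
          apply Finset.sum_le_sum
          intro x' _
          rw [abs_mul, abs_of_nonneg (hφ0 x s a x')]
          exact mul_le_mul_of_nonneg_left (hVV' s x') (hφ0 x s a x')
      _ = M := by rw [← Finset.sum_mul, hφ1, one_mul]
  have eq1 : (∑ s, μ z x s * F s) - (∑ s, μ' z x s * F' s)
      = (∑ s, (μ z x s - μ' z x s) * F s) + ∑ s, μ' z x s * (F s - F' s) := by
    rw [← Finset.sum_sub_distrib, ← Finset.sum_add_distrib]
    apply Finset.sum_congr rfl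
    intro s _
    ring
  have goal : |(∑ s, μ z x s * F s) - ∑ s, μ' z x s * F' s|
      ≤ εμ * (Fintype.card S : ℝ) * G / (1 - δ) + δ * M := by
    rw [eq1]
    refine le_trans (abs_add_le _ _) (add_le_add ?_ ?_)
    · calc |∑ s, (μ z x s - μ' z x s) * F s|
          ≤ ∑ s, |(μ z x s - μ' z x s) * F s| := Finset.abs_sum_le_sum_abs _ _
        _ ≤ ∑ s, |μ z x s - μ' z x s| * C := by
            apply Finset.sum_le_sum
            intro s _
            rw [abs_mul]
            exact mul_le_mul_of_nonneg_left (hF s) (abs_nonneg _)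
        _ = (∑ s, |μ z x s - μ' z x s|) * C := by rw [Finset.sum_mul]
        _ ≤ ((Fintype.card S : ℝ) * εμ) * C :=
            mul_le_mul_of_nonneg_right (hclose z x) hC0
        _ = εμ * (Fintype.card S : ℝ) * G / (1 - δ) := by
            rw [hC]; ring
    · calc |∑ s, μ' z x s * (F s - F' s)|
          ≤ ∑ s, |μ' z x s * (F s - F' s)| := Finset.abs_sum_le_sum_abs _ _
        _ ≤ ∑ s, μ' z x s * (δ * M) := by
            apply Finset.sum_le_sum
            intro s _
            rw [abs_mul, abs_of_nonneg (hμ'0 z x s)]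
            exact mul_le_mul_of_nonneg_left (hFF' s) (hμ'0 z x s)
        _ = δ * M := by rw [← Finset.sum_mul, hμ'1, one_mul]
  exact goal
end

section
/- Let $W, Y$ be finite sets, $\pi, \bar\pi$ probability distributions on $W \times Y$ with $|\pi(w,y) - \bar\pi(w,y)| \le \eta$ for all $(w,y)$, and let $P(s \mid w) \in [0,1]$ be a conditional kernel with $P(s\mid w) \le p^{\max}$ for all $w$. Fix $y$ and define $N(s) = \sum_w P(s\mid w)\pi(w,y)$, $\bar N(s) = \sum_w P(s\mid w)\bar\pi(w,y)$, $D = \sum_w \pi(w,y)$, $\bar D = \sum_w \bar\pi(w,y)$. If $D \ge m > 0$ and $\bar D > 0$, then $\left|\frac{N(s)}{D} - \frac{\bar N(s)}{\bar D}\right| \le \frac{(1 + p^{\max})\,|W|\,\eta}{m}$. -/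
theorem stmt_9 {W Y S : Type*} [Fintype W] [Fintype Y]
    (π π' : W → Y → ℝ) (η pmax m : ℝ)
    (hπ0 : ∀ w y, 0 ≤ π w y) (hπ1 : ∑ w, ∑ y, π w y = 1)
    (hπ'0 : ∀ w y, 0 ≤ π' w y) (hπ'1 : ∑ w, ∑ y, π' w y = 1)
    (hclose : ∀ w y, |π w y - π' w y| ≤ η)
    (P : S → W → ℝ) (hP0 : ∀ s w, 0 ≤ P s w) (hP1 : ∀ s w, P s w ≤ 1)
    (hPmax : ∀ s w, P s w ≤ pmax)
    (y : Y) (s : S)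
    (hm : 0 < m) (hD : m ≤ ∑ w, π w y) (hD' : 0 < ∑ w, π' w y) :
    |(∑ w, P s w * π w y) / (∑ w, π w y)
      - (∑ w, P s w * π' w y) / (∑ w, π' w y)|
      ≤ (1 + pmax) * (Fintype.card W : ℝ) * η / m := by
  have hne : Nonempty W := by
    by_contra h
    rw [not_nonempty_iff] at h
    simp at hD'
  obtain ⟨w0⟩ := hne
  set D := ∑ w, π w y with hDdef
  set D' := ∑ w, π' w y with hD'def
  set N := ∑ w, P s w * π w y with hNdef
  set N' := ∑ w, P s w * π' w y with hN'def
  set c : ℝ := (Fintype.card W : ℝ) with hc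
  have hDpos : 0 < D := lt_of_lt_of_le hm hD
  have hη : 0 ≤ η := le_trans (abs_nonneg _) (hclose w0 y)
  have hpmax : 0 ≤ pmax := le_trans (hP0 s w0) (hPmax s w0)
  have hcpos : 0 ≤ c := by positivity
  have hNN' : |N - N'| ≤ pmax * c * η := by
    rw [hNdef, hN'def, ← Finset.sum_sub_distrib]
    calc |∑ w, (P s w * π w y - P s w * π' w y)|
        ≤ ∑ w, |P s w * π w y - P s w * π' w y| := Finset.abs_sum_le_sum_abs _ _
      _ ≤ ∑ _w : W, pmax * η := by
          apply Finset.sum_le_sum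
          intro i _
          rw [← mul_sub, abs_mul, abs_of_nonneg (hP0 s i)]
          exact mul_le_mul (hPmax s i) (hclose i y) (abs_nonneg _) hpmax
      _ = pmax * c * η := by simp [hc]; ring
  have hDD' : |D' - D| ≤ c * η := by
    rw [hDdef, hD'def, ← Finset.sum_sub_distrib]
    calc |∑ w, (π' w y - π w y)|
        ≤ ∑ w, |π' w y - π w y| := Finset.abs_sum_le_sum_abs _ _
      _ ≤ ∑ _w : W, η := by
          apply Finset.sum_le_sum
          intro i _
          rw [abs_sub_comm]
          exact hclose i y
      _ = c * η := by simp [hc]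
  have hN'0 : 0 ≤ N' := Finset.sum_nonneg fun i _ => mul_nonneg (hP0 s i) (hπ'0 i y)
  have hN'D' : N' ≤ D' := Finset.sum_le_sum fun i _ => by
    nlinarith [hP1 s i, hπ'0 i y, hP0 s i]
  have hratio : N' / D' ≤ 1 := by
    rw [div_le_one hD']
    exact hN'D'
  have hratio0 : 0 ≤ N' / D' := div_nonneg hN'0 hD'.le
  have key : N / D - N' / D' = (N - N') / D + (N' / D') * ((D' - D) / D) := by
    field_simp
    ring
  have h1 : |N / D - N' / D'| ≤ |N - N'| / D + (N' / D') * (|D' - D| / D) := by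
    rw [key]
    refine (abs_add_le _ _).trans ?_
    rw [abs_div, abs_of_pos hDpos, abs_mul, abs_of_nonneg hratio0,
      abs_div, abs_of_pos hDpos]
  have hr1 : |N - N'| / D ≤ pmax * c * η / m :=
    div_le_div₀ (by positivity) hNN' hm hD
  have hr2 : (N' / D') * (|D' - D| / D) ≤ 1 * (c * η / m) :=
    mul_le_mul hratio (div_le_div₀ (by positivity) hDD' hm hD)
      (div_nonneg (abs_nonneg _) hDpos.le) zero_le_one
  have hfinal : pmax * c * η / m + 1 * (c * η / m) = (1 + pmax) * c * η / m := by
    field_simp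
    ring
  linarith
end
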